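/- Let x = (x₁,x₂) ∈ ℝ² be nonzero and y = (y₁,y₂,y₃) ∈ ℝ³ be nonzero, regarded as the binary forms x₁u₁+x₂u₂ and y₁u₁²+y₂u₁u₂+y₃u₂². Then there exist an invertible matrix g ∈ GL(2,ℝ) and nonzero scalars c, d ∈ ℝ such that the substituted forms x∘g and y∘g (where (x∘g)(u₁,u₂) = x(g₁₁u₁+g₁₂u₂, g₂₁u₁+g₂₂u₂), and similarly for y) satisfy x∘g = c·u₁ and y∘g = d·q, where q is exactly one of the five quadratic forms u₁²−u₂², u₂², u₁², u₁u₂, u₁²+u₂²; moreover for a given pair (x,y) precisely one of the five forms q can occur in this way. -/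

import Mathlib

noncomputable section

/-- The action of `g ∈ GL(2,ℝ)` on binary linear forms by substitution of variables,
in coordinates: `x∘g` has coefficients `(x₁g₁₁ + x₂g₂₁, x₁g₁₂ + x₂g₂₂)`. -/
def linAct (g : Matrix (Fin 2) (Fin 2) ℝ) (x : Fin 2 → ℝ) : Fin 2 → ℝ :=
  ![x 0 * g 0 0 + x 1 * g 1 0, x 0 * g 0 1 + x 1 * g 1 1]

/-- The action of `g ∈ GL(2,ℝ)` on binary quadratic forms by substitution of variables. -/
def quadAct (g : Matrix (Fin 2) (Fin 2) ℝ) (y : Fin 3 → ℝ) : Fin 3 → ℝ :=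
  ![y 0 * g 0 0 ^ 2 + y 1 * g 0 0 * g 1 0 + y 2 * g 1 0 ^ 2,
    2 * y 0 * g 0 0 * g 0 1 + y 1 * (g 0 0 * g 1 1 + g 0 1 * g 1 0) + 2 * y 2 * g 1 0 * g 1 1,
    y 0 * g 0 1 ^ 2 + y 1 * g 0 1 * g 1 1 + y 2 * g 1 1 ^ 2]

/-- The five model quadratic forms `u₁²−u₂²`, `u₂²`, `u₁²`, `u₁u₂`, `u₁²+u₂²`. -/
def fiveForms : Fin 5 → (Fin 3 → ℝ) :=
  ![![1, 0, -1], ![0, 0, 1], ![1, 0, 0], ![0, 1, 0], ![1, 0, 1]]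

/-!
Under substitution by `g` the discriminant `disc y` is multiplied by `(det g)²`, and so is the
resultant `res x y`; rescaling `x` by `c` and `y` by `d` multiplies them by `d²` and `c² d`. So the
sign of `disc y` and whether `res x y` vanishes are invariants, and they separate the five model
forms. For existence, `!![x₀, -x₁; x₁, x₀]` moves `x` to a multiple of `u₁`, whose stabiliser
contains the lower triangular matrices `!![1, 0; b, e]`; with these one completes the square in `y`.
-/

def disc (y : Fin 3 → ℝ) : ℝ := y 1 ^ 2 - 4 * y 0 * y 2

/-- The value of `y` at the point `(x₁, -x₀)`, where `x` vanishes. -/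
def res (x : Fin 2 → ℝ) (y : Fin 3 → ℝ) : ℝ :=
  y 0 * x 1 ^ 2 - y 1 * x 0 * x 1 + y 2 * x 0 ^ 2

def ScaledOrbitRel (x : Fin 2 → ℝ) (y : Fin 3 → ℝ) (x' : Fin 2 → ℝ) (y' : Fin 3 → ℝ) : Prop :=
  ∃ (g : Matrix (Fin 2) (Fin 2) ℝ) (c d : ℝ),
    IsUnit g.det ∧ c ≠ 0 ∧ d ≠ 0 ∧ linAct g x = c • x' ∧ quadAct g y = d • y'

section Action

variable (g h : Matrix (Fin 2) (Fin 2) ℝ) (x : Fin 2 → ℝ) (y : Fin 3 → ℝ)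

lemma linAct_mul : linAct (g * h) x = linAct h (linAct g x) := by
  funext i
  fin_cases i <;> simp [linAct, Matrix.mul_apply, Fin.sum_univ_two] <;> ring

lemma quadAct_mul : quadAct (g * h) y = quadAct h (quadAct g y) := by
  funext i
  fin_cases i <;> simp [quadAct, Matrix.mul_apply, Fin.sum_univ_two] <;> ring

lemma quadAct_one : quadAct 1 y = y := by
  funext i
  fin_cases i <;> simp [quadAct]

lemma quadAct_zero : quadAct g 0 = 0 := by
  funext i
  fin_cases i <;> simp [quadAct]

lemma disc_quadAct : disc (quadAct g y) = g.det ^ 2 * disc y := by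
  simp [disc, quadAct, Matrix.det_fin_two]
  ring

lemma res_linAct_quadAct : res (linAct g x) (quadAct g y) = g.det ^ 2 * res x y := by
  simp [res, linAct, quadAct, Matrix.det_fin_two]
  ring

lemma disc_smul (d : ℝ) : disc (d • y) = d ^ 2 * disc y := by
  simp [disc]
  ring

lemma res_smul (c d : ℝ) : res (c • x) (d • y) = c ^ 2 * d * res x y := by
  simp [res]
  ring

end Action

lemma quadAct_ne_zero {g : Matrix (Fin 2) (Fin 2) ℝ} (hg : IsUnit g.det) {y : Fin 3 → ℝ}
    (hy : y ≠ 0) : quadAct g y ≠ 0 := by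
  intro h
  apply hy
  rw [← quadAct_one y, ← Matrix.mul_nonsing_inv g hg, quadAct_mul, h, quadAct_zero]

section Invariants

variable {x x' : Fin 2 → ℝ} {y y' : Fin 3 → ℝ}

lemma ScaledOrbitRel.sign_disc_eq (h : ScaledOrbitRel x y x' y') :
    SignType.sign (disc y) = SignType.sign (disc y') := by
  obtain ⟨g, c, d, hg, -, hd, -, hy⟩ := h
  have hdisc : g.det ^ 2 * disc y = d ^ 2 * disc y' := by
    rw [← disc_quadAct, hy, disc_smul]
  have hdet : 0 < g.det ^ 2 := pow_two_pos_of_ne_zero (isUnit_iff_ne_zero.mp hg)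
  simpa [sign_mul, sign_pos hdet, sign_pos (pow_two_pos_of_ne_zero hd)] using
    congrArg SignType.sign hdisc

lemma ScaledOrbitRel.res_eq_zero_iff (h : ScaledOrbitRel x y x' y') :
    res x y = 0 ↔ res x' y' = 0 := by
  obtain ⟨g, c, d, hg, hc, hd, hx, hy⟩ := h
  have hres : g.det ^ 2 * res x y = c ^ 2 * d * res x' y' := by
    rw [← res_linAct_quadAct, hx, hy, res_smul]
  have hdet : g.det ≠ 0 := isUnit_iff_ne_zero.mp hg
  constructor <;> intro h0 <;> simpa [h0, hdet, hc, hd] using hres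

end Invariants

lemma fiveForms_eq_of_invariants_eq {i j : Fin 5}
    (hdisc : SignType.sign (disc (fiveForms i)) = SignType.sign (disc (fiveForms j)))
    (hres : res ![1, 0] (fiveForms i) = 0 ↔ res ![1, 0] (fiveForms j) = 0) : i = j := by
  fin_cases i <;> fin_cases j <;> simp_all [fiveForms, disc, res]

lemma eq_of_scaledOrbitRel_fiveForms {x : Fin 2 → ℝ} {y : Fin 3 → ℝ} {i j : Fin 5}
    (hi : ScaledOrbitRel x y ![1, 0] (fiveForms i))
    (hj : ScaledOrbitRel x y ![1, 0] (fiveForms j)) : i = j :=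
  fiveForms_eq_of_invariants_eq (hi.sign_disc_eq.symm.trans hj.sign_disc_eq)
    (hi.res_eq_zero_iff.symm.trans hj.res_eq_zero_iff)

def lowerTri (b e : ℝ) : Matrix (Fin 2) (Fin 2) ℝ := !![1, 0; b, e]

lemma det_lowerTri (b e : ℝ) : (lowerTri b e).det = e := by
  simp [lowerTri, Matrix.det_fin_two]

lemma linAct_lowerTri (b e c : ℝ) : linAct (lowerTri b e) ![c, 0] = ![c, 0] := by
  funext i
  fin_cases i <;> simp [linAct, lowerTri]

lemma quadAct_lowerTri (b e : ℝ) (y : Fin 3 → ℝ) :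
    quadAct (lowerTri b e) y =
      ![y 0 + y 1 * b + y 2 * b ^ 2, (y 1 + 2 * y 2 * b) * e, y 2 * e ^ 2] := by
  funext i
  fin_cases i <;> simp [quadAct, lowerTri]; ring

lemma quadAct_lowerTri_completeSquare {y : Fin 3 → ℝ} (h2 : y 2 ≠ 0) (e : ℝ) :
    quadAct (lowerTri (-y 1 / (2 * y 2)) e) y = ![-disc y / (4 * y 2), 0, y 2 * e ^ 2] := by
  rw [quadAct_lowerTri]
  congr 2
  · field_simp
    simp only [disc]
    ring
  · field_simp
    ring

lemma exists_lowerTri_of_coeff_two_ne_zero {y : Fin 3 → ℝ} (h2 : y 2 ≠ 0) :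
    ∃ (i : Fin 5) (b e d : ℝ), e ≠ 0 ∧ d ≠ 0 ∧ quadAct (lowerTri b e) y = d • fiveForms i := by
  rcases eq_or_ne (disc y) 0 with hD | hD
  · refine ⟨1, -y 1 / (2 * y 2), 1, y 2, one_ne_zero, h2, ?_⟩
    rw [quadAct_lowerTri_completeSquare h2, hD]
    simp [fiveForms]
  set e := √|disc y| / (2 * y 2)
  have he : y 2 * e ^ 2 = |disc y| / (4 * y 2) := by
    rw [div_pow, Real.sq_sqrt (abs_nonneg _)]
    field_simp
    ring
  have hne : e ≠ 0 := div_ne_zero (by positivity) (by positivity)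
  have hd : -disc y / (4 * y 2) ≠ 0 := div_ne_zero (neg_ne_zero.mpr hD) (by positivity)
  rcases hD.lt_or_gt with hneg | hpos
  · refine ⟨4, -y 1 / (2 * y 2), e, _, hne, hd, ?_⟩
    rw [quadAct_lowerTri_completeSquare h2, he, abs_of_neg hneg]
    simp [fiveForms]
  · refine ⟨0, -y 1 / (2 * y 2), e, _, hne, hd, ?_⟩
    rw [quadAct_lowerTri_completeSquare h2, he, abs_of_pos hpos]
    simp [fiveForms]
    ring

lemma exists_lowerTri_of_coeff_two_eq_zero {y : Fin 3 → ℝ} (hy : y ≠ 0) (h2 : y 2 = 0) :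
    ∃ (i : Fin 5) (b e d : ℝ), e ≠ 0 ∧ d ≠ 0 ∧ quadAct (lowerTri b e) y = d • fiveForms i := by
  rcases eq_or_ne (y 1) 0 with h1 | h1
  · have h0 : y 0 ≠ 0 := fun h0 => hy <| by
      funext i
      fin_cases i <;> simp [h0, h1, h2]
    refine ⟨2, 0, 1, y 0, one_ne_zero, h0, ?_⟩
    rw [quadAct_lowerTri]
    simp [fiveForms, h1, h2]
  · refine ⟨3, -y 0 / y 1, 1, y 1, one_ne_zero, h1, ?_⟩
    rw [quadAct_lowerTri]
    simp [fiveForms, h2]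
    field_simp
    ring

lemma exists_lowerTri_eq_smul_fiveForms {y : Fin 3 → ℝ} (hy : y ≠ 0) :
    ∃ (i : Fin 5) (b e d : ℝ), e ≠ 0 ∧ d ≠ 0 ∧ quadAct (lowerTri b e) y = d • fiveForms i := by
  by_cases h2 : y 2 = 0
  · exact exists_lowerTri_of_coeff_two_eq_zero hy h2
  · exact exists_lowerTri_of_coeff_two_ne_zero h2

lemma exists_linAct_eq_of_ne_zero {x : Fin 2 → ℝ} (hx : x ≠ 0) :
    ∃ (r : Matrix (Fin 2) (Fin 2) ℝ) (c : ℝ), IsUnit r.det ∧ c ≠ 0 ∧ linAct r x = ![c, 0] := by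
  have hn : x 0 ^ 2 + x 1 ^ 2 ≠ 0 := fun h => hx <| by
    have h0 : x 0 = 0 := by nlinarith [sq_nonneg (x 0), sq_nonneg (x 1)]
    have h1 : x 1 = 0 := by nlinarith [sq_nonneg (x 0), sq_nonneg (x 1)]
    funext i
    fin_cases i <;> simp [h0, h1]
  refine ⟨!![x 0, -x 1; x 1, x 0], _, ?_, hn, ?_⟩
  · rw [isUnit_iff_ne_zero, Matrix.det_fin_two_of]
    simpa [sq] using hn
  · funext i
    fin_cases i <;> simp [linAct] <;> ring

lemma exists_scaledOrbitRel_fiveForms {x : Fin 2 → ℝ} (hx : x ≠ 0) {y : Fin 3 → ℝ}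
    (hy : y ≠ 0) : ∃ i, ScaledOrbitRel x y ![1, 0] (fiveForms i) := by
  obtain ⟨r, c, hr, hc, hrx⟩ := exists_linAct_eq_of_ne_zero hx
  obtain ⟨i, b, e, d, he, hd, hq⟩ := exists_lowerTri_eq_smul_fiveForms (quadAct_ne_zero hr hy)
  refine ⟨i, r * lowerTri b e, c, d, ?_, hc, hd, ?_, ?_⟩
  · rw [Matrix.det_mul, det_lowerTri]
    exact hr.mul (isUnit_iff_ne_zero.mpr he)
  · rw [linAct_mul, hrx, linAct_lowerTri]
    simp
  · rw [quadAct_mul, hq]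

/-- Classification of the five `GL(2,ℝ)`-orbits of pairs of a nonzero binary linear form and a
nonzero binary quadratic form, up to scale. -/
theorem stmt11 (x : Fin 2 → ℝ) (hx : x ≠ 0) (y : Fin 3 → ℝ) (hy : y ≠ 0) :
    ∃! i : Fin 5, ∃ (g : Matrix (Fin 2) (Fin 2) ℝ) (c d : ℝ),
      IsUnit g.det ∧ c ≠ 0 ∧ d ≠ 0 ∧ linAct g x = ![c, 0] ∧ quadAct g y = d • fiveForms i := by
  have hrel (i : Fin 5) : ScaledOrbitRel x y ![1, 0] (fiveForms i) ↔
      ∃ (g : Matrix (Fin 2) (Fin 2) ℝ) (c d : ℝ),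
        IsUnit g.det ∧ c ≠ 0 ∧ d ≠ 0 ∧ linAct g x = ![c, 0] ∧ quadAct g y = d • fiveForms i := by
    simp [ScaledOrbitRel]
  simp only [← hrel]
  obtain ⟨i, hi⟩ := exists_scaledOrbitRel_fiveForms hx hy
  exact ⟨i, hi, fun j hj => eq_of_scaledOrbitRel_fiveForms hj hi⟩
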